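/- Let C₁ and C₂ be closed affine subsets of X with C₂ ⊆ C₁ and C₂ ∩ int(dom φ) ≠ ∅, and let x ∈ int(dom φ). Then P_{C₂}(x) = P_{C₂}(P_{C₁}(x)) and D_{C₂}(P_{C₁}(x)) + D_{C₁}(x) = D_{C₂}(x). -/

import Mathlib

open Set Filter Topology MeasureTheory ProbabilityTheory
open scoped InnerProductSpace ENNReal Classical

noncomputable section

/-- A Legendre function on a Euclidean space `X`, represented by its (finite) values `f` on its
effective domain `dom`, together with the data of its Fenchel conjugate (`conj` on `domConj`)
and the gradients of both. -/
structure LegendreFn (X : Type*) [NormedAddCommGroup X] [InnerProductSpace ℝ X]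
    [FiniteDimensional ℝ X] where
  /-- the values of `φ` on its domain -/
  f : X → ℝ
  /-- the effective domain of `φ` (`φ = +∞` outside of it) -/
  dom : Set X
  /-- the values of the Fenchel conjugate `φ*` on its domain -/
  conj : X → ℝ
  /-- the effective domain of `φ*` -/
  domConj : Set X
  /-- the gradient of `φ` (meaningful on `interior dom`) -/
  grad : X → X
  /-- the gradient of `φ*` (meaningful on `interior domConj`) -/
  gradConj : X → X
  dom_nonempty : dom.Nonempty
  int_dom_nonempty : (interior dom).Nonempty
  dom_convex : Convex ℝ dom
  convexOn : ConvexOn ℝ dom f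
  /-- `φ` is closed: the epigraph of the extended function is closed -/
  closedEpi : IsClosed {p : X × ℝ | p.1 ∈ dom ∧ f p.1 ≤ p.2}
  /-- essential smoothness, part 1: differentiability on the interior of the domain -/
  hasGrad : ∀ x ∈ interior dom, HasGradientAt f (grad x) x
  /-- essential smoothness, part 2: the gradient blows up at the boundary -/
  grad_blowup : ∀ (u : ℕ → X) (x : X), (∀ n, u n ∈ interior dom) → x ∈ frontier dom →
      Tendsto u atTop (nhds x) → Tendsto (fun n => ‖grad (u n)‖) atTop atTop
  /-- `domConj` is the set where the conjugate supremum is finite -/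
  domConj_spec : ∀ y : X, y ∈ domConj ↔ BddAbove ((fun x => ⟪x, y⟫_ℝ - f x) '' dom)
  /-- `conj` is the Fenchel conjugate of `φ` -/
  conj_spec : ∀ y ∈ domConj, IsLUB ((fun x => ⟪x, y⟫_ℝ - f x) '' dom) (conj y)
  int_domConj_nonempty : (interior domConj).Nonempty
  /-- essential strict convexity: `φ` is strictly convex on every convex subset of `dom ∂φ` -/
  strict : ∀ s : Set X,
      s ⊆ {x ∈ dom | ∃ v : X, ∀ z ∈ dom, f x + ⟪v, z - x⟫_ℝ ≤ f z} →
      Convex ℝ s → StrictConvexOn ℝ s f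
  hasGradConj : ∀ y ∈ interior domConj, HasGradientAt conj (gradConj y) y
  /-- Bregman projections onto closed convex sets meeting `interior dom` exist
  (Bauschke–Borwein). -/
  proj_exists : ∀ S : Set X, IsClosed S → Convex ℝ S → (S ∩ interior dom).Nonempty →
      ∀ x ∈ interior dom, ∃ p ∈ S ∩ interior dom, ∀ z ∈ S ∩ dom,
        f p - ⟪p, grad x⟫_ℝ ≤ f z - ⟪z, grad x⟫_ℝ

namespace LegendreFn

variable {X : Type*} [NormedAddCommGroup X] [InnerProductSpace ℝ X] [FiniteDimensional ℝ X]

/-- The Bregman distance `D_φ(x, y)`; the formula is meaningful for `x ∈ dom φ` and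
`y ∈ int (dom φ)`. -/
def breg (L : LegendreFn X) (x y : X) : ℝ :=
  L.f x - L.f y - ⟪x - y, L.grad y⟫_ℝ

/-- The Bregman distance from the point `y` to the set `S`: `D_S(y) = inf_{z ∈ S} D_φ(z, y)`. -/
def distTo (L : LegendreFn X) (S : Set X) (y : X) : ℝ :=
  sInf ((fun z => L.breg z y) '' (S ∩ L.dom))

/-- `p` is the Bregman projection of `x` onto `S`. -/
def IsBregProj (L : LegendreFn X) (S : Set X) (x p : X) : Prop :=
  p ∈ S ∧ p ∈ interior L.dom ∧ ∀ z ∈ S ∩ L.dom, L.breg p x ≤ L.breg z x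

/-- The Bregman projection of `x` onto `S` (as a function; well defined whenever the Bregman
projection exists, since it is then unique). -/
def proj (L : LegendreFn X) (S : Set X) (x : X) : X :=
  @Classical.epsilon X ⟨0⟩ (L.IsBregProj S x)

end LegendreFn

/-- Condition SC (sequential consistency). -/
def SCcond {X : Type*} [NormedAddCommGroup X] [InnerProductSpace ℝ X] [FiniteDimensional ℝ X]
    (L : LegendreFn X) : Prop :=
  ∀ z y : ℕ → X, (∀ n, z n ∈ interior L.dom) → (∀ n, y n ∈ interior L.dom) →
    Bornology.IsBounded (Set.range z) → Bornology.IsBounded (Set.range y) →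
    Tendsto (fun n => L.breg (z n) (y n)) atTop (nhds 0) →
    Tendsto (fun n => z n - y n) atTop (nhds 0)

/-- Assumption H0: `C ≠ X`, `dom φ*` is open and `int (dom φ) ∩ C ≠ ∅`
(`φ` being Legendre is part of the `LegendreFn` structure). -/
def H0 {X : Type*} [NormedAddCommGroup X] [InnerProductSpace ℝ X] [FiniteDimensional ℝ X]
    (L : LegendreFn X) (C : Set X) : Prop :=
  C ≠ Set.univ ∧ IsOpen L.domConj ∧ (interior L.dom ∩ C).Nonempty

/-- `G` is the Moore–Penrose pseudoinverse of `T`. -/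
def IsMPInv {E F : Type*} [NormedAddCommGroup E] [InnerProductSpace ℝ E] [FiniteDimensional ℝ E]
    [NormedAddCommGroup F] [InnerProductSpace ℝ F] [FiniteDimensional ℝ F]
    (T : E →L[ℝ] F) (G : F →L[ℝ] E) : Prop :=
  T ∘L G ∘L T = T ∧ G ∘L T ∘L G = G ∧
    ContinuousLinearMap.adjoint (T ∘L G) = T ∘L G ∧
    ContinuousLinearMap.adjoint (G ∘L T) = G ∘L T

/-- The orthogonal projection onto a subspace, as a map `X →L[ℝ] X`. -/
def projL {X : Type*} [NormedAddCommGroup X] [InnerProductSpace ℝ X] [FiniteDimensional ℝ X]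
    (K : Submodule ℝ X) : X →L[ℝ] X :=
  K.subtypeL.comp K.orthogonalProjectionOnto

/-- The set `K(x)` of points having the same Bregman projection onto `C` as `x` and not larger
Bregman distance to `C`. -/
def Kset {X : Type*} [NormedAddCommGroup X] [InnerProductSpace ℝ X] [FiniteDimensional ℝ X]
    (L : LegendreFn X) (C : Set X) (x : X) : Set X :=
  {z | z ∈ interior L.dom ∧ L.proj C z = L.proj C x ∧ L.distTo C z ≤ L.distTo C x}

section Affine

variable {X Y : Type*} [NormedAddCommGroup X] [InnerProductSpace ℝ X] [FiniteDimensional ℝ X]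
  [NormedAddCommGroup Y] [InnerProductSpace ℝ Y] [FiniteDimensional ℝ Y]
  {I : Type*} {Yf : I → Type*} [∀ i, NormedAddCommGroup (Yf i)]
  [∀ i, InnerProductSpace ℝ (Yf i)] [∀ i, FiniteDimensional ℝ (Yf i)]

/-- Assumption H2₁: `φ*` is twice differentiable (with second derivative `hess`), and for all
`x ∈ int (dom φ) ∩ C`, `A ∘ ∇²φ*(∇φ(x)) ≠ 0` and
`sup_i ‖Aᵢ* (Aᵢ ∇²φ*(∇φ(x)) Aᵢ*)† Aᵢ‖ < ∞`. -/
def H21 (L : LegendreFn X) (A : ∀ i, X →L[ℝ] Yf i) (AY : X →L[ℝ] Y) (C : Set X)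
    (hess : X → X →L[ℝ] X) : Prop :=
  (∀ y ∈ interior L.domConj, HasFDerivAt L.gradConj (hess y) y) ∧
  ∀ x ∈ interior L.dom ∩ C,
    AY ∘L hess (L.grad x) ≠ 0 ∧
    ∃ M : ℝ, ∀ (i : I) (G : Yf i →L[ℝ] Yf i),
      IsMPInv (A i ∘L hess (L.grad x) ∘L ContinuousLinearMap.adjoint (A i)) G →
      ‖ContinuousLinearMap.adjoint (A i) ∘L G ∘L A i‖ ≤ M

/-- The orthogonal projection `Q_i(x)` onto `range (H(x) Aᵢ*)`, where `H(x)` (here `Hrt x`) is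
the positive square root of `∇²φ*(∇φ(x))`. -/
def Qproj (A : ∀ i, X →L[ℝ] Yf i) (Hrt : X → X →L[ℝ] X) (i : I) (x : X) : X →L[ℝ] X :=
  projL (LinearMap.range ((Hrt x ∘L ContinuousLinearMap.adjoint (A i)) : Yf i →ₗ[ℝ] X))

/-- The subspace `V(x) = range (H(x) A*)`. -/
def Vsub (AY : X →L[ℝ] Y) (Hrt : X → X →L[ℝ] X) (x : X) : Submodule ℝ X :=
  LinearMap.range ((Hrt x ∘L ContinuousLinearMap.adjoint AY) : Y →ₗ[ℝ] X)

/-- `γ_𝒞(x) = inf_{v ∈ V(x) \ {0}} sup_i ‖Q_i(x) v‖² / ‖v‖²`. -/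
def gammaC (A : ∀ i, X →L[ℝ] Yf i) (AY : X →L[ℝ] Y) (Hrt : X → X →L[ℝ] X) (x : X) : ℝ :=
  ⨅ v : {v : X // v ∈ Vsub AY Hrt x ∧ v ≠ 0},
    ⨆ i : I, ‖Qproj A Hrt i x v.1‖ ^ 2 / ‖v.1‖ ^ 2

/-- `σ_𝒞(x)`, the (deterministic, greedy) contraction factor. -/
def sigmaC (L : LegendreFn X) (Cs : I → Set X) (C : Set X) (γ : X → ℝ) (x : X) : ℝ :=
  if x ∈ C then 1 - γ x
  else ⨆ z : ↥(Kset L C x \ C), ⨅ i : I, L.distTo C (L.proj (Cs i) z) / L.distTo C z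

end Affine

section Stochastic

variable {X Y : Type*} [NormedAddCommGroup X] [InnerProductSpace ℝ X] [FiniteDimensional ℝ X]
  [NormedAddCommGroup Y] [InnerProductSpace ℝ Y] [FiniteDimensional ℝ Y]
  {I : Type*} {Yf : I → Type*} [∀ i, NormedAddCommGroup (Yf i)]
  [∀ i, InnerProductSpace ℝ (Yf i)] [∀ i, FiniteDimensional ℝ (Yf i)]
  {Ω : Type*} [MeasurableSpace Ω]

/-- Assumption H2₂ (stochastic version of H2₁, with an essential supremum). -/
def H22 (L : LegendreFn X) (A : ∀ i, X →L[ℝ] Yf i) (AY : X →L[ℝ] Y) (C : Set X)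
    (hess : X → X →L[ℝ] X) (P : Measure Ω) (ξ : Ω → I) : Prop :=
  (∀ y ∈ interior L.domConj, HasFDerivAt L.gradConj (hess y) y) ∧
  ∀ x ∈ interior L.dom ∩ C,
    AY ∘L hess (L.grad x) ≠ 0 ∧
    ∃ M : ℝ, ∀ᵐ ω ∂P, ∀ G : Yf (ξ ω) →L[ℝ] Yf (ξ ω),
      IsMPInv (A (ξ ω) ∘L hess (L.grad x) ∘L ContinuousLinearMap.adjoint (A (ξ ω))) G →
      ‖ContinuousLinearMap.adjoint (A (ξ ω)) ∘L G ∘L A (ξ ω)‖ ≤ M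

/-- `Q̄(x) = E[Q_ξ(x)]` (Bochner expectation). -/
def Qbar (A : ∀ i, X →L[ℝ] Yf i) (Hrt : X → X →L[ℝ] X) (P : Measure Ω) (ξ : Ω → I) (x : X) :
    X →L[ℝ] X :=
  ∫ ω, Qproj A Hrt (ξ ω) x ∂P

/-- `γ_{𝒞,μ}(x) = inf_{v ∈ V(x) \ {0}} ⟪Q̄(x) v, v⟫ / ‖v‖²`. -/
def gammaCmu (A : ∀ i, X →L[ℝ] Yf i) (AY : X →L[ℝ] Y) (Hrt : X → X →L[ℝ] X)
    (P : Measure Ω) (ξ : Ω → I) (x : X) : ℝ :=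
  ⨅ v : {v : X // v ∈ Vsub AY Hrt x ∧ v ≠ 0},
    ⟪Qbar A Hrt P ξ x v.1, v.1⟫_ℝ / ‖v.1‖ ^ 2

/-- `σ_{𝒞,μ}(x)`, the stochastic contraction factor. -/
def sigmaCmu (L : LegendreFn X) (Cs : I → Set X) (C : Set X) (γ : X → ℝ)
    (P : Measure Ω) (ξ : Ω → I) (x : X) : ℝ :=
  if x ∈ C then 1 - γ x
  else ⨆ z : ↥(Kset L C x \ C),
    (∫ ω, L.distTo C (L.proj (Cs (ξ ω)) z) ∂P) / L.distTo C z

/-- `D̄_C(x) = E[D_{C_ξ}(x)]`. -/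
def DbarFn (L : LegendreFn X) (Cs : I → Set X) (P : Measure Ω) (ξ : Ω → I) (x : X) : ℝ :=
  ∫ ω, L.distTo (Cs (ξ ω)) x ∂P

end Stochastic

/-! For an affine set `C` and `p = P_C(x)`, the first-order condition at `p` holds along every
line of `C` through `p`, so `⟪∇φ(p) - ∇φ(x), z - p⟫ = 0` for all `z ∈ C`. The three-point
identity then gives the Pythagorean relation `D(z, x) = D(z, p) + D(p, x)` on `C`. For
`C₂ ⊆ C₁` this holds on `C₂`, so `D(·, x)` and `D(·, P_{C₁}(x))` differ on `C₂` by the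
constant `D_{C₁}(x)`: they have the same minimiser, and the minimal values differ by it. -/

namespace LegendreFn

open AffineMap

variable {X : Type*} [NormedAddCommGroup X] [InnerProductSpace ℝ X] [FiniteDimensional ℝ X]
  (L : LegendreFn X)

theorem hasDerivAt_f_lineMap {x : X} (hx : x ∈ interior L.dom) (z : X) :
    HasDerivAt (fun t : ℝ => L.f (lineMap x z t)) ⟪L.grad x, z - x⟫_ℝ 0 := by
  have h := (L.hasGrad x hx).hasFDerivAt.comp_hasDerivAt_of_eq 0 hasDerivAt_lineMap
    (lineMap_apply_zero x z).symm
  rwa [InnerProductSpace.toDual_apply_apply] at h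

theorem f_add_inner_grad_le {x z : X} (hx : x ∈ interior L.dom) (hz : z ∈ L.dom) :
    L.f x + ⟪L.grad x, z - x⟫_ℝ ≤ L.f z := by
  have hconv : ConvexOn ℝ (lineMap x z ⁻¹' L.dom) (fun t : ℝ => L.f (lineMap x z t)) :=
    L.convexOn.comp_affineMap (lineMap x z)
  have h := hconv.le_slope_of_hasDerivAt (x := 0) (y := 1)
    (by simpa using interior_subset hx) (by simpa using hz) one_pos (L.hasDerivAt_f_lineMap hx z)
  simp only [slope_def_field, lineMap_apply_one, lineMap_apply_zero, sub_zero, div_one] at h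
  linarith

theorem strictConvexOn_inter_interior {S : Set X} (hS : Convex ℝ S) :
    StrictConvexOn ℝ (S ∩ interior L.dom) L.f :=
  L.strict _
    (fun _ hy => ⟨interior_subset hy.2, L.grad _, fun _ hz => L.f_add_inner_grad_le hy.2 hz⟩)
    (hS.inter L.dom_convex.interior)

theorem breg_three_point (z p x : X) :
    L.breg z x = L.breg z p + L.breg p x + ⟪L.grad p - L.grad x, z - p⟫_ℝ := by
  simp only [breg, inner_sub_left, inner_sub_right, real_inner_comm (L.grad p),
    real_inner_comm (L.grad x)]
  ring

theorem isBregProj_unique {S : Set X} (hS : Convex ℝ S) {x p q : X}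
    (hp : L.IsBregProj S x p) (hq : L.IsBregProj S x q) : p = q := by
  have hS' : Convex ℝ (S ∩ interior L.dom) := hS.inter L.dom_convex.interior
  have hstrict : StrictConvexOn ℝ (S ∩ interior L.dom) fun z => L.breg z x :=
    (((L.strictConvexOn_inter_interior hS).add_convexOn
      ((-innerSL ℝ (L.grad x)).toLinearMap.convexOn hS')).add_const
        (⟪x, L.grad x⟫_ℝ - L.f x)).congr fun z _ => by
      simp only [breg, Pi.add_apply, ContinuousLinearMap.coe_coe,
        neg_apply, innerSL_apply_apply, inner_sub_left, real_inner_comm z]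
      ring
  have hmin : ∀ {r}, L.IsBregProj S x r → IsMinOn (fun z => L.breg z x) (S ∩ interior L.dom) r :=
    fun hr z hz => hr.2.2 z ⟨hz.1, interior_subset hz.2⟩
  exact hstrict.eq_of_isMinOn (hmin hp) (hmin hq) ⟨hp.1, hp.2.1⟩ ⟨hq.1, hq.2.1⟩

theorem exists_isBregProj {S : Set X} (hS : IsClosed S) (hS' : Convex ℝ S)
    (hSint : (S ∩ interior L.dom).Nonempty) {x : X} (hx : x ∈ interior L.dom) :
    ∃ p, L.IsBregProj S x p := by
  obtain ⟨p, ⟨hpS, hpint⟩, hmin⟩ := L.proj_exists S hS hS' hSint x hx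
  refine ⟨p, hpS, hpint, fun z hz => ?_⟩
  have := hmin z hz
  simp only [breg, inner_sub_left]
  linarith

theorem proj_eq_of_isBregProj {S : Set X} (hS : Convex ℝ S) {x p : X}
    (hp : L.IsBregProj S x p) : L.proj S x = p :=
  L.isBregProj_unique hS (Classical.epsilon_spec ⟨p, hp⟩) hp

theorem distTo_eq_breg_of_isBregProj {S : Set X} {x p : X} (hp : L.IsBregProj S x p) :
    L.distTo S x = L.breg p x := by
  refine IsLeast.csInf_eq ⟨⟨p, ⟨hp.1, interior_subset hp.2.1⟩, rfl⟩, ?_⟩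
  rintro _ ⟨z, hz, rfl⟩
  exact hp.2.2 z hz

theorem inner_grad_sub_grad_eq_zero {C : AffineSubspace ℝ X} {x p : X}
    (hp : L.IsBregProj C x p) {z : X} (hz : z ∈ C) :
    ⟪L.grad p - L.grad x, z - p⟫_ℝ = 0 := by
  set h : ℝ → ℝ := fun t => L.breg (lineMap p z t) x
  have hderiv : HasDerivAt h ⟪L.grad p - L.grad x, z - p⟫_ℝ 0 := by
    refine (((L.hasDerivAt_f_lineMap hp.2.1 z).sub_const (L.f x)).sub
      (((hasDerivAt_lineMap (a := p) (b := z)).sub_const x).inner ℝ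
        (hasDerivAt_const 0 (L.grad x)))).congr_deriv ?_
    simp [inner_sub_left, real_inner_comm]
  have hmin : IsLocalMin h 0 := by
    have hopen : IsOpen (lineMap p z ⁻¹' interior L.dom) :=
      isOpen_interior.preimage (lineMap p z : ℝ →ᵃ[ℝ] X).continuous_of_finiteDimensional
    filter_upwards [hopen.mem_nhds (by simpa using hp.2.1)] with t ht
    simpa [h] using hp.2.2 _ ⟨AffineMap.lineMap_mem t hp.1 hz, interior_subset ht⟩
  exact hmin.hasDerivAt_eq_zero hderiv

theorem breg_eq_breg_add_breg_of_isBregProj {C : AffineSubspace ℝ X} {x p : X}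
    (hp : L.IsBregProj C x p) {z : X} (hz : z ∈ C) :
    L.breg z x = L.breg z p + L.breg p x := by
  rw [L.breg_three_point z p x, L.inner_grad_sub_grad_eq_zero hp hz, add_zero]

theorem isBregProj_of_isBregProj_of_le {C₁ C₂ : AffineSubspace ℝ X} (hle : C₂ ≤ C₁) {x p q : X}
    (hp : L.IsBregProj C₁ x p) (hq : L.IsBregProj C₂ p q) : L.IsBregProj C₂ x q := by
  refine ⟨hq.1, hq.2.1, fun z hz => ?_⟩
  rw [L.breg_eq_breg_add_breg_of_isBregProj hp (hle hq.1),
    L.breg_eq_breg_add_breg_of_isBregProj hp (hle hz.1)]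
  linarith [hq.2.2 z hz]

end LegendreFn

/-- If `C₁, C₂` are closed affine sets with `C₂ ⊆ C₁` and
`C₂ ∩ int (dom φ) ≠ ∅`, then for every `x ∈ int (dom φ)`,
`P_{C₂}(x) = P_{C₂}(P_{C₁}(x))` and `D_{C₂}(P_{C₁}(x)) + D_{C₁}(x) = D_{C₂}(x)`. -/
theorem stmt_0 {X : Type*} [NormedAddCommGroup X] [InnerProductSpace ℝ X]
    [FiniteDimensional ℝ X]
    (L : LegendreFn X) (C₁ C₂ : AffineSubspace ℝ X)
    (hcl₁ : IsClosed (C₁ : Set X)) (hcl₂ : IsClosed (C₂ : Set X))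
    (hsub : (C₂ : Set X) ⊆ (C₁ : Set X))
    (hint : ((C₂ : Set X) ∩ interior L.dom).Nonempty)
    (x : X) (hx : x ∈ interior L.dom) :
    L.proj (C₂ : Set X) x = L.proj (C₂ : Set X) (L.proj (C₁ : Set X) x) ∧
      L.distTo (C₂ : Set X) (L.proj (C₁ : Set X) x) + L.distTo (C₁ : Set X) x =
        L.distTo (C₂ : Set X) x := by
  obtain ⟨p, hp⟩ := L.exists_isBregProj hcl₁ C₁.convex
    (hint.mono (inter_subset_inter_left _ hsub)) hx
  obtain ⟨q, hq⟩ := L.exists_isBregProj hcl₂ C₂.convex hint hp.2.1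
  have hqx : L.IsBregProj C₂ x q := L.isBregProj_of_isBregProj_of_le hsub hp hq
  rw [L.proj_eq_of_isBregProj C₁.convex hp, L.proj_eq_of_isBregProj C₂.convex hq,
    L.proj_eq_of_isBregProj C₂.convex hqx, L.distTo_eq_breg_of_isBregProj hq,
    L.distTo_eq_breg_of_isBregProj hp, L.distTo_eq_breg_of_isBregProj hqx,
    L.breg_eq_breg_add_breg_of_isBregProj hp (hsub hq.1)]
  exact ⟨rfl, rfl⟩
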